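/- Let $U_q$ be the set of $q$-element subsets of $[n]$, let $a_Z \geq 0$ for $Z \in U_q$, and define $\mu_\ell = \max_{Y \in U_\ell} \sum_{Z \in U_q, Z \supseteq Y} a_Z$. Let $w \geq 0$ be an integer, $\epsilon \geq 0$, and suppose $X_1, \dots, X_n$ are $\{0,1\}$-valued random variables such that for every $s \leq wq$ and all indices $i_1 < \dots < i_s$, $P(X_{i_1} = \cdots = X_{i_s} = 1) \leq (1+\epsilon) 2^{-s}$. Then $\mathbb{E}\left[ \left( \sum_{Z \in U_q} a_Z \prod_{v \in Z} X_v \right)^w \right] \leq (1+\epsilon) \left( \sum_{k=0}^q \binom{wq}{k} \mu_k 2^{k-q} \right)^w$. -/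

import Mathlib

/-!
Expanding `(∑ a_Z ∏_{v ∈ Z} X_v)^w` writes it as a nonnegative combination of indicators of the
events `{X_v = 1 for all v ∈ T}` with `|T| ≤ wq`, whose probabilities are at most
`(1 + ε) 2^{-|T|}`. The resulting weight is bounded by peeling off one factor at a time: adding a
`q`-set `Z` to the current union `T` costs `2^{|Z ∩ T| - q}`, and grouping the sets `Z` by
`Y = Z ∩ T` leaves at most `C(wq, k)` choices of `Y` with `|Y| = k`, each carrying total weight
at most `μ_k`.

The `X_i` are not assumed measurable, so the integral is bounded through integrable majorants
(indicators of measurable hulls) rather than by linearity of expectation.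
-/

open Finset MeasureTheory ProbabilityTheory

/-- The maximum, over `ℓ`-element subsets `Y` of `[n]`, of the sum of `a Z` over
`q`-element subsets `Z ⊇ Y` (taken as `0` if there are no `ℓ`-element subsets). -/
noncomputable def polyMu (n q : ℕ) (a : Finset (Fin n) → ℝ) (ℓ : ℕ) : ℝ :=
  WithBot.unbotD 0 (((Finset.powersetCard ℓ (Finset.univ : Finset (Fin n))).image fun Y =>
    ∑ Z ∈ (Finset.powersetCard q (Finset.univ : Finset (Fin n))).filter
      (fun Z => Y ⊆ Z), a Z).max)

section Majorant

variable {Ω : Type*} [MeasurableSpace Ω] {μ : Measure Ω}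

def HasIntegralMajorant (μ : Measure Ω) (f : Ω → ℝ) (B : ℝ) : Prop :=
  ∃ g, Integrable g μ ∧ f ≤ g ∧ ∫ ω, g ω ∂μ ≤ B

namespace HasIntegralMajorant

variable {f : Ω → ℝ} {B B' : ℝ}

theorem integral_le (h : HasIntegralMajorant μ f B) (hf : 0 ≤ f) : ∫ ω, f ω ∂μ ≤ B := by
  obtain ⟨g, hg, hfg, hgB⟩ := h
  exact (integral_mono_of_nonneg (ae_of_all _ hf) hg (ae_of_all _ hfg)).trans hgB

theorem mono (h : HasIntegralMajorant μ f B) (hB : B ≤ B') : HasIntegralMajorant μ f B' :=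
  let ⟨g, hg, hfg, hgB⟩ := h
  ⟨g, hg, hfg, hgB.trans hB⟩

theorem indicator_one [IsFiniteMeasure μ] (s : Set Ω) :
    HasIntegralMajorant μ (s.indicator 1) (μ.real s) := by
  refine ⟨(toMeasurable μ s).indicator 1, ?_, ?_, ?_⟩
  · exact (integrable_const 1).indicator (measurableSet_toMeasurable μ s)
  · exact Set.indicator_le_indicator_of_subset (subset_toMeasurable μ s) (fun _ => zero_le_one)
  · rw [integral_indicator_one (measurableSet_toMeasurable μ s), measureReal_def,
      measure_toMeasurable, measureReal_def]

theorem sum_mul {ι : Type*} {s : Finset ι} {a : ι → ℝ} {f : ι → Ω → ℝ} {B : ι → ℝ}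
    (ha : ∀ i ∈ s, 0 ≤ a i) (h : ∀ i ∈ s, HasIntegralMajorant μ (f i) (B i)) :
    HasIntegralMajorant μ (fun ω => ∑ i ∈ s, a i * f i ω) (∑ i ∈ s, a i * B i) := by
  choose! g hg hfg hgB using h
  refine ⟨fun ω => ∑ i ∈ s, a i * g i ω, integrable_finsetSum _ fun i hi => (hg i hi).const_mul _,
    fun ω => sum_le_sum fun i hi => mul_le_mul_of_nonneg_left (hfg i hi ω) (ha i hi), ?_⟩
  rw [integral_finsetSum _ fun i hi => (hg i hi).const_mul _]
  exact sum_le_sum fun i hi => by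
    rw [integral_const_mul]; exact mul_le_mul_of_nonneg_left (hgB i hi) (ha i hi)

end HasIntegralMajorant

end Majorant

section Peeling

variable {Ω ι : Type*} [MeasurableSpace Ω] {μ : Measure Ω} [IsFiniteMeasure μ] [DecidableEq ι]

theorem hasIntegralMajorant_indicator_mul_pow (E : Finset ι → Set Ω)
    (hE : ∀ T T', E (T ∪ T') = E T ∩ E T') {U : Finset (Finset ι)} {q N : ℕ}
    (hU : ∀ Z ∈ U, Z.card ≤ q) {a : Finset ι → ℝ} (ha : ∀ Z, 0 ≤ a Z) {ρ : Finset ι → ℝ}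
    {M : ℝ} (hM : 0 ≤ M) (hprob : ∀ T, T.card ≤ N → μ.real (E T) ≤ ρ T)
    (hstep : ∀ T, T.card ≤ N → ∑ Z ∈ U, a Z * ρ (T ∪ Z) ≤ ρ T * M) :
    ∀ m T, T.card + m * q ≤ N → HasIntegralMajorant μ
      (fun ω => (E T).indicator 1 ω * (∑ Z ∈ U, a Z * (E Z).indicator 1 ω) ^ m) (ρ T * M ^ m) := by
  intro m
  induction m with
  | zero =>
    intro T hT
    simpa using (HasIntegralMajorant.indicator_one (μ := μ) (E T)).mono (hprob T (by omega))
  | succ m ih =>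
    intro T hT
    have hexpand : (fun ω => (E T).indicator 1 ω * (∑ Z ∈ U, a Z * (E Z).indicator 1 ω) ^ (m + 1))
        = fun ω => ∑ Z ∈ U, a Z * ((E (T ∪ Z)).indicator 1 ω *
            (∑ Z ∈ U, a Z * (E Z).indicator 1 ω) ^ m) := by
      funext ω
      rw [pow_succ', ← mul_assoc, mul_sum, sum_mul]
      refine sum_congr rfl fun Z _ => ?_
      rw [hE, Set.inter_indicator_one, Pi.mul_apply]
      ring
    have hunion : ∀ Z ∈ U, (T ∪ Z).card + m * q ≤ N := fun Z hZ => by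
      have := card_union_le T Z
      have := hU Z hZ
      nlinarith
    rw [hexpand]
    refine (HasIntegralMajorant.sum_mul (fun Z _ => ha Z) fun Z hZ => ih _ (hunion Z hZ)).mono ?_
    calc ∑ Z ∈ U, a Z * (ρ (T ∪ Z) * M ^ m) = (∑ Z ∈ U, a Z * ρ (T ∪ Z)) * M ^ m := by
          rw [sum_mul]; exact sum_congr rfl fun Z _ => by ring
      _ ≤ ρ T * M * M ^ m := by gcongr; exact hstep T (by nlinarith)
      _ = ρ T * M ^ (m + 1) := by ring

end Peeling

section Combinatorics

variable {n q : ℕ} {a : Finset (Fin n) → ℝ}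

theorem le_polyMu {ℓ : ℕ} {Y : Finset (Fin n)} (hY : Y.card = ℓ) :
    ∑ Z ∈ powersetCard q univ with Y ⊆ Z, a Z ≤ polyMu n q a ℓ := by
  have hmem := mem_image_of_mem (fun Y => ∑ Z ∈ powersetCard q univ with Y ⊆ Z, a Z)
    (mem_powersetCard.mpr ⟨subset_univ Y, hY⟩)
  obtain ⟨m, hm⟩ := max_of_mem hmem
  rw [polyMu, hm]
  exact WithBot.coe_le_coe.mp (hm ▸ le_max hmem)

theorem polyMu_nonneg (ha : ∀ Z, 0 ≤ a Z) (ℓ : ℕ) : 0 ≤ polyMu n q a ℓ := by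
  rcases (powersetCard ℓ (univ : Finset (Fin n))).eq_empty_or_nonempty with h | ⟨Y, hY⟩
  · simp [polyMu, h]
  · exact (sum_nonneg fun Z _ => ha Z).trans (le_polyMu (mem_powersetCard.mp hY).2)

-- Each `q`-set `Z` with `|Z ∩ T| = k` lies above the `k`-subset `Z ∩ T` of `T`.
theorem sum_filter_card_inter_eq_le (ha : ∀ Z, 0 ≤ a Z) (T : Finset (Fin n)) (k : ℕ) :
    ∑ Z ∈ powersetCard q univ with (Z ∩ T).card = k, a Z ≤ T.card.choose k * polyMu n q a k := by
  have hmaps : ∀ Z ∈ {Z ∈ powersetCard q (univ : Finset (Fin n)) | (Z ∩ T).card = k},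
      Z ∩ T ∈ powersetCard k T :=
    fun Z hZ => mem_powersetCard.mpr ⟨inter_subset_right, (mem_filter.mp hZ).2⟩
  calc ∑ Z ∈ powersetCard q univ with (Z ∩ T).card = k, a Z
      = ∑ Y ∈ powersetCard k T,
          ∑ Z ∈ powersetCard q univ with (Z ∩ T).card = k ∧ Z ∩ T = Y, a Z := by
        rw [← sum_fiberwise_of_maps_to hmaps]
        simp only [filter_filter]
    _ ≤ ∑ Y ∈ powersetCard k T, polyMu n q a k := by
        refine sum_le_sum fun Y hY => le_trans ?_ (le_polyMu (mem_powersetCard.mp hY).2)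
        refine sum_le_sum_of_subset_of_nonneg (fun Z hZ => ?_) fun Z _ _ => ha Z
        simp only [mem_filter] at hZ ⊢
        exact ⟨hZ.1, hZ.2.2 ▸ inter_subset_left⟩
    _ = T.card.choose k * polyMu n q a k := by
        rw [sum_const, card_powersetCard, nsmul_eq_mul]

theorem sum_mul_zpow_card_inter_le (ha : ∀ Z, 0 ≤ a Z) {N : ℕ} {T : Finset (Fin n)}
    (hT : T.card ≤ N) :
    ∑ Z ∈ powersetCard q univ, a Z * (2 : ℝ) ^ (((Z ∩ T).card : ℤ) - q) ≤
      ∑ k ∈ range (q + 1), (N.choose k : ℝ) * polyMu n q a k * (2 : ℝ) ^ ((k : ℤ) - q) := by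
  have hmaps : ∀ Z ∈ powersetCard q (univ : Finset (Fin n)), (Z ∩ T).card ∈ range (q + 1) :=
    fun Z hZ => mem_range_succ_iff.mpr
      ((card_le_card inter_subset_left).trans (mem_powersetCard.mp hZ).2.le)
  rw [← sum_fiberwise_of_maps_to hmaps]
  refine sum_le_sum fun k _ => ?_
  calc ∑ Z ∈ powersetCard q univ with (Z ∩ T).card = k, a Z * (2 : ℝ) ^ (((Z ∩ T).card : ℤ) - q)
      = (∑ Z ∈ powersetCard q univ with (Z ∩ T).card = k, a Z) * (2 : ℝ) ^ ((k : ℤ) - q) := by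
        rw [sum_mul]
        exact sum_congr rfl fun Z hZ => by rw [(mem_filter.mp hZ).2]
    _ ≤ T.card.choose k * polyMu n q a k * (2 : ℝ) ^ ((k : ℤ) - q) := by
        gcongr; exact sum_filter_card_inter_eq_le ha T k
    _ ≤ N.choose k * polyMu n q a k * (2 : ℝ) ^ ((k : ℤ) - q) := by
        have := polyMu_nonneg ha k (q := q)
        gcongr

theorem sum_mul_zpow_neg_card_union_le (ha : ∀ Z, 0 ≤ a Z) {N : ℕ} {T : Finset (Fin n)}
    (hT : T.card ≤ N) :
    ∑ Z ∈ powersetCard q univ, a Z * (2 : ℝ) ^ (-((T ∪ Z).card : ℤ)) ≤ (2 : ℝ) ^ (-(T.card : ℤ)) *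
      ∑ k ∈ range (q + 1), (N.choose k : ℝ) * polyMu n q a k * (2 : ℝ) ^ ((k : ℤ) - q) := by
  have hsplit : ∀ Z ∈ powersetCard q (univ : Finset (Fin n)),
      (2 : ℝ) ^ (-((T ∪ Z).card : ℤ)) =
        (2 : ℝ) ^ (-(T.card : ℤ)) * (2 : ℝ) ^ (((Z ∩ T).card : ℤ) - q) := fun Z hZ => by
    have hcard := card_union_add_card_inter T Z
    rw [inter_comm, ← zpow_add₀ two_ne_zero, ← (mem_powersetCard.mp hZ).2]
    congr 1
    omega
  rw [sum_congr rfl fun Z hZ => by rw [hsplit Z hZ, mul_left_comm], ← mul_sum]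
  gcongr
  exact sum_mul_zpow_card_inter_le ha hT

end Combinatorics

section Events

variable {Ω ι : Type*} (X : ι → Ω → ℝ)

theorem setOf_forall_mem_union_eq_one [DecidableEq ι] (T T' : Finset ι) :
    {ω | ∀ i ∈ T ∪ T', X i ω = 1} = {ω | ∀ i ∈ T, X i ω = 1} ∩ {ω | ∀ i ∈ T', X i ω = 1} := by
  ext ω
  simp [or_imp, forall_and]

theorem prod_eq_indicator_of_zero_or_one (hX01 : ∀ i ω, X i ω = 0 ∨ X i ω = 1) (T : Finset ι)
    (ω : Ω) : ∏ i ∈ T, X i ω = {ω | ∀ i ∈ T, X i ω = 1}.indicator 1 ω := by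
  by_cases hω : ∀ i ∈ T, X i ω = 1
  · rw [Set.indicator_of_mem (show ω ∈ {ω | ∀ i ∈ T, X i ω = 1} from hω), prod_eq_one hω, Pi.one_apply]
  · push Not at hω
    obtain ⟨i, hi, hXi⟩ := hω
    rw [Set.indicator_of_notMem fun h : ω ∈ {ω | ∀ i ∈ T, X i ω = 1} => hXi (h i hi),
      prod_eq_zero hi ((hX01 i ω).resolve_right hXi)]

end Events

/-- Proposition 4.2, part 2 (Fapp-prop2, part 2): approximate
`wq`-wise independence. -/
theorem stmt2 {Ω : Type*} [MeasurableSpace Ω] (μ : Measure Ω) [IsProbabilityMeasure μ]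
    (n q : ℕ) (a : Finset (Fin n) → ℝ) (ha : ∀ Z, 0 ≤ a Z)
    (w : ℕ) (ε : ℝ) (hε : 0 ≤ ε)
    (X : Fin n → Ω → ℝ) (hX01 : ∀ i ω, X i ω = 0 ∨ X i ω = 1)
    (happrox : ∀ (t : Finset (Fin n)), t.card ≤ w * q →
      μ {ω | ∀ i ∈ t, X i ω = 1} ≤
        ENNReal.ofReal ((1 + ε) * (2 : ℝ) ^ (-(t.card : ℤ)))) :
    ∫ ω, (∑ Z ∈ Finset.powersetCard q (Finset.univ : Finset (Fin n)),
        a Z * ∏ v ∈ Z, X v ω) ^ w ∂μ ≤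
    (1 + ε) * (∑ k ∈ Finset.range (q + 1),
      ((w * q).choose k : ℝ) * polyMu n q a k * (2 : ℝ) ^ ((k : ℤ) - (q : ℤ))) ^ w := by
  set M := ∑ k ∈ range (q + 1), ((w * q).choose k : ℝ) * polyMu n q a k * (2 : ℝ) ^ ((k : ℤ) - q)
  set E : Finset (Fin n) → Set Ω := fun T => {ω | ∀ i ∈ T, X i ω = 1}
  have hM : 0 ≤ M := sum_nonneg fun k _ => by have := polyMu_nonneg ha k (q := q); positivity
  have hprob : ∀ T : Finset (Fin n), T.card ≤ w * q →
      μ.real (E T) ≤ (1 + ε) * (2 : ℝ) ^ (-(T.card : ℤ)) :=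
    fun T hT => ENNReal.toReal_le_of_le_ofReal (by positivity) (happrox T hT)
  have hstep : ∀ T : Finset (Fin n), T.card ≤ w * q →
      ∑ Z ∈ powersetCard q univ, a Z * ((1 + ε) * (2 : ℝ) ^ (-((T ∪ Z).card : ℤ))) ≤
        (1 + ε) * (2 : ℝ) ^ (-(T.card : ℤ)) * M := fun T hT => by
    rw [mul_assoc, ← sum_congr rfl fun Z _ => mul_left_comm (1 + ε) _ _, ← mul_sum]
    gcongr
    exact sum_mul_zpow_neg_card_union_le ha hT
  have hmajorant := hasIntegralMajorant_indicator_mul_pow E (setOf_forall_mem_union_eq_one X)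
    (fun Z hZ => (mem_powersetCard.mp hZ).2.le) ha hM hprob hstep w ∅ (by simp)
  have hS : ∀ ω, (∑ Z ∈ powersetCard q univ, a Z * ∏ v ∈ Z, X v ω) ^ w =
      (E ∅).indicator 1 ω * (∑ Z ∈ powersetCard q univ, a Z * (E Z).indicator 1 ω) ^ w := by
    intro ω
    simp [E, prod_eq_indicator_of_zero_or_one X hX01]
  simp_rw [hS]
  have hone : ∀ s : Set Ω, 0 ≤ s.indicator (1 : Ω → ℝ) := fun s =>
    Set.indicator_nonneg fun _ _ => zero_le_one
  refine (hmajorant.integral_le fun ω => ?_).trans_eq (by simp)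
  exact mul_nonneg (hone _ ω) (pow_nonneg (sum_nonneg fun Z _ => mul_nonneg (ha Z) (hone _ ω)) w)
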